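/- Rational numbers $Q_j, u_j, d_j, L_j, e_j, \nu_j$ ($j=1,2,3$) and $H_u, H_d$ satisfy the supersymmetric Green-Schwarz system (‡) if and only if $Q = (\tfrac{103}{27}, \tfrac{76}{27}, \tfrac{22}{27})$, $u = (\tfrac{128}{27}, \tfrac{47}{27}, \tfrac{20}{27})$, $d = (\tfrac{71}{27}, \tfrac{44}{27}, \tfrac{17}{27})$, $L = (\tfrac{23}{9}, \tfrac{14}{9}, \tfrac{14}{9})$, $e = (\tfrac{44}{9}, \tfrac{17}{9}, \tfrac{8}{9})$, $\nu = (1, 0, 0)$, $H_u = -\tfrac{14}{9}$, $H_d = \tfrac{5}{9}$; i.e., system (‡) has this unique rational solution. -/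

import Mathlib

/-!
The linear equations of (‡) leave one degree of freedom: every charge is an affine function
of `Hd`. Along this line the quadratic terms of the first anomaly condition cancel, so it
reduces to the linear equation `50 - 90 * Hd = 0`, which forces `Hd = 5/9` and hence all
other charges.
-/

/-- The supersymmetric Green-Schwarz system (‡): the Green-Schwarz anomaly conditions
together with the Froggatt-Nielsen phenomenological constraints. -/
def SystemDoubleDagger (Q u d L e ν : Fin 3 → ℚ) (Hu Hd : ℚ) : Prop :=
  (∑ j, (Q j ^ 2 - 2 * u j ^ 2 + d j ^ 2 - L j ^ 2 + e j ^ 2)) + Hu ^ 2 - Hd ^ 2 = 0 ∧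
  1/2 * ((∑ j, (3 * Q j + L j)) + Hu + Hd)
    - 3/20 * (2/3 * (∑ j, (Q j + 8 * u j + 2 * d j + 3 * L j + 6 * e j))
      + 2 * (Hu + Hd)) = 0 ∧
  (∑ j, (2 * Q j + u j + d j)) - (∑ j, (3 * Q j + L j)) - Hu - Hd = 0 ∧
  Q 2 + u 2 + Hu = 0 ∧ Q 1 + u 1 + Hu = 3 ∧ Q 0 + u 0 + Hu = 7 ∧
  Q 2 + d 2 + Hd = 2 ∧ Q 1 + d 1 + Hd = 5 ∧ Q 0 + d 0 + Hd = 7 ∧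
  L 2 + e 2 + Hd = 3 ∧ L 1 + e 1 + Hd = 4 ∧ L 0 + e 0 + Hd = 8 ∧
  Q 0 - Q 1 = 1 ∧ Q 1 - Q 2 = 2 ∧
  L 2 + ν 2 + Hu = 0 ∧ L 0 - L 1 = 1 ∧ L 1 - L 2 = 0 ∧
  ν 0 = 1 ∧ ν 1 = 0 ∧ ν 2 = 0

theorem eq_vec3 {α : Type*} {f : Fin 3 → α} {a b c : α} (h₀ : f 0 = a) (h₁ : f 1 = b)
    (h₂ : f 2 = c) : f = ![a, b, c] := by
  subst h₀ h₁ h₂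
  exact (FinVec.etaExpand_eq f).symm

namespace SystemDoubleDagger

variable {Q u d L e ν : Fin 3 → ℚ} {Hu Hd : ℚ}

theorem charges_eq (h : SystemDoubleDagger Q u d L e ν Hu Hd) :
    Q = ![4 - Hd / 3, 3 - Hd / 3, 1 - Hd / 3] ∧
    u = ![4 + 4 * Hd / 3, 1 + 4 * Hd / 3, 4 * Hd / 3] ∧
    d = ![3 - 2 * Hd / 3, 2 - 2 * Hd / 3, 1 - 2 * Hd / 3] ∧
    L = ![2 + Hd, 1 + Hd, 1 + Hd] ∧
    e = ![6 - 2 * Hd, 3 - 2 * Hd, 2 - 2 * Hd] ∧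
    ν = ![1, 0, 0] ∧ Hu = -1 - Hd := by
  obtain ⟨-, h₂, h₃, h₄, h₅, h₆, h₇, h₈, h₉, h₁₀, h₁₁, h₁₂, h₁₃, h₁₄, h₁₅, h₁₆, h₁₇,
    h₁₈, h₁₉, h₂₀⟩ := h
  simp only [Fin.sum_univ_three] at h₂ h₃
  refine ⟨eq_vec3 ?_ ?_ ?_, eq_vec3 ?_ ?_ ?_, eq_vec3 ?_ ?_ ?_, eq_vec3 ?_ ?_ ?_,
    eq_vec3 ?_ ?_ ?_, eq_vec3 h₁₈ h₁₉ h₂₀, ?_⟩ <;> linarith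

theorem hd_eq (h : SystemDoubleDagger Q u d L e ν Hu Hd) : Hd = 5 / 9 := by
  obtain ⟨rfl, rfl, rfl, rfl, rfl, -, rfl⟩ := h.charges_eq
  have hquad := h.1
  simp only [Fin.sum_univ_three, Matrix.cons_val_zero, Matrix.cons_val_one,
    Matrix.cons_val_two, Matrix.head_cons, Matrix.tail_cons] at hquad
  linear_combination -1 / 90 * hquad

end SystemDoubleDagger

theorem systemDoubleDagger_solution :
    SystemDoubleDagger ![103/27, 76/27, 22/27] ![128/27, 47/27, 20/27] ![71/27, 44/27, 17/27]
      ![23/9, 14/9, 14/9] ![44/9, 17/9, 8/9] ![1, 0, 0] (-14/9) (5/9) := by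
  norm_num [SystemDoubleDagger, Fin.sum_univ_three, Matrix.cons_val_two, Matrix.tail_cons]

/-- The supersymmetric Green-Schwarz system (‡) has a unique rational solution, the
charge assignment of Table 3. -/
theorem systemDoubleDagger_iff_unique_solution (Q u d L e ν : Fin 3 → ℚ) (Hu Hd : ℚ) :
    SystemDoubleDagger Q u d L e ν Hu Hd ↔
      (Q = ![103/27, 76/27, 22/27] ∧ u = ![128/27, 47/27, 20/27] ∧
       d = ![71/27, 44/27, 17/27] ∧ L = ![23/9, 14/9, 14/9] ∧
       e = ![44/9, 17/9, 8/9] ∧ ν = ![1, 0, 0] ∧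
       Hu = -14/9 ∧ Hd = 5/9) := by
  constructor
  · intro h
    have hHd := h.hd_eq
    obtain ⟨rfl, rfl, rfl, rfl, rfl, rfl, rfl⟩ := h.charges_eq
    subst hHd
    norm_num
  · rintro ⟨rfl, rfl, rfl, rfl, rfl, rfl, rfl, rfl⟩
    exact systemDoubleDagger_solution
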